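/- Let g : 2^V → ℝ≥0 be a monotone submodular set function with g(∅) = 0, and let S_k be the greedy seed set obtained by iteratively adding the element with maximal marginal gain. Then g(S_k) ≥ (1 − 1/e)·max_{|T|≤k} g(T). -/
import Mathlib


/-- Greedy `(1 - 1/e)`-approximation guarantee for monotone submodular maximization. -/
theorem greedy_guarantee {V : Type*} [Fintype V] [DecidableEq V]
    (g : Finset V → ℝ)
    (hmono : ∀ S T : Finset V, S ⊆ T → g S ≤ g T)
    (hsub : ∀ (S T : Finset V) (u : V), S ⊆ T → u ∉ T →
      g (S ∪ {u}) - g S ≥ g (T ∪ {u}) - g T)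
    (hzero : g ∅ = 0)
    (k : ℕ) (s : ℕ → V) (S : ℕ → Finset V)
    (hS0 : S 0 = ∅) (hSsucc : ∀ j, S (j + 1) = S j ∪ {s j})
    (hgreedy : ∀ j < k, ∀ v : V,
      g (S j ∪ {s j}) - g (S j) ≥ g (S j ∪ {v}) - g (S j)) :
    ∀ T : Finset V, T.card ≤ k → g (S k) ≥ (1 - 1 / Real.exp 1) * g T := by
  intro T hT
  -- Submodular expansion lemma
  have expand : ∀ (B A : Finset V),
      g (A ∪ B) - g A ≤ ∑ v ∈ B \ A, (g (A ∪ {v}) - g A) := by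
    intro B
    induction B using Finset.induction_on with
    | empty => intro A; simp
    | @insert b B' hb ih =>
      intro A
      by_cases hbA : b ∈ A
      · have h1 : A ∪ insert b B' = A ∪ B' := by ext x; simp; aesop
        have h2 : insert b B' \ A = B' \ A := by ext x; simp; aesop
        rw [h1, h2]; exact ih A
      · have h1 : A ∪ insert b B' = (A ∪ B') ∪ {b} := by ext x; simp
        have h2 : insert b B' \ A = insert b (B' \ A) := by ext x; simp; aesop
        have hb' : b ∉ B' \ A := by simp [hb]
        rw [h1, h2, Finset.sum_insert hb']
        have hbAB : b ∉ A ∪ B' := by simp; tauto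
        have key : g ((A ∪ B') ∪ {b}) - g (A ∪ B') ≤ g (A ∪ {b}) - g A :=
          hsub A (A ∪ B') b Finset.subset_union_left hbAB
        have := ih A
        linarith
  by_cases hk : k = 0
  · subst hk
    have hT0 : T = ∅ := Finset.card_eq_zero.mp (Nat.le_zero.mp hT)
    rw [hT0, hzero, hS0, hzero]; simp
  · have hkpos : (0:ℝ) < k := by exact_mod_cast Nat.pos_of_ne_zero hk
    have hgT0 : 0 ≤ g T := by
      have := hmono ∅ T (Finset.empty_subset T); linarith [hzero ▸ this]
    have hc : (0:ℝ) ≤ 1 - 1/(k:ℝ) := by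
      have h1 : (1:ℝ) ≤ k := by exact_mod_cast Nat.one_le_iff_ne_zero.mpr hk
      have : 1/(k:ℝ) ≤ 1 := by
        rw [div_le_one hkpos]; exact h1
      linarith
    have step : ∀ j < k, g T - g (S (j+1)) ≤ (1 - 1/(k:ℝ)) * (g T - g (S j)) := by
      intro j hj
      have gain_nonneg : 0 ≤ g (S (j+1)) - g (S j) := by
        rw [hSsucc]
        have := hmono (S j) (S j ∪ {s j}) Finset.subset_union_left
        linarith
      have h1 : g T ≤ g (S j ∪ T) := hmono T _ Finset.subset_union_right
      have h2 := expand T (S j)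
      have h3 : ∑ v ∈ T \ S j, (g (S j ∪ {v}) - g (S j))
          ≤ (T \ S j).card • (g (S (j+1)) - g (S j)) := by
        apply Finset.sum_le_card_nsmul
        intro v _
        rw [hSsucc]
        exact hgreedy j hj v
      rw [nsmul_eq_mul] at h3
      have h4 : ((T \ S j).card : ℝ) ≤ (k : ℝ) := by
        exact_mod_cast le_trans (Finset.card_le_card (Finset.sdiff_subset)) hT
      have h5 : ((T \ S j).card : ℝ) * (g (S (j+1)) - g (S j))
          ≤ (k:ℝ) * (g (S (j+1)) - g (S j)) :=
        mul_le_mul_of_nonneg_right h4 gain_nonneg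
      have h6 : g T - g (S j) ≤ (k:ℝ) * (g (S (j+1)) - g (S j)) := by linarith
      have h7 : (g T - g (S j)) / (k:ℝ) ≤ g (S (j+1)) - g (S j) := by
        rw [div_le_iff₀ hkpos]; linarith [mul_comm ((k:ℝ)) (g (S (j+1)) - g (S j))]
      have h8 : (1 - 1/(k:ℝ)) * (g T - g (S j))
          = (g T - g (S j)) - (g T - g (S j)) / (k:ℝ) := by ring
      linarith
    have geom : ∀ j ≤ k, g T - g (S j) ≤ (1 - 1/(k:ℝ))^j * g T := by
      intro j
      induction j with
      | zero => intro _; simp [hS0, hzero]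
      | succ n ih =>
        intro hnk
        have h1 := step n (by omega)
        have h2 := ih (by omega)
        calc g T - g (S (n+1)) ≤ (1 - 1/(k:ℝ)) * (g T - g (S n)) := h1
          _ ≤ (1 - 1/(k:ℝ)) * ((1 - 1/(k:ℝ))^n * g T) :=
              mul_le_mul_of_nonneg_left h2 hc
          _ = (1 - 1/(k:ℝ))^(n+1) * g T := by ring
    have final := geom k le_rfl
    have hpow : (1 - 1/(k:ℝ))^k ≤ 1 / Real.exp 1 := by
      have h1 : 1 - 1/(k:ℝ) ≤ Real.exp (-(1/(k:ℝ))) := by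
        have := Real.add_one_le_exp (-(1/(k:ℝ))); linarith
      have h2 : (1 - 1/(k:ℝ))^k ≤ (Real.exp (-(1/(k:ℝ))))^k :=
        pow_le_pow_left₀ hc h1 k
      have h3 : (Real.exp (-(1/(k:ℝ))))^k = Real.exp (-1) := by
        rw [← Real.exp_nat_mul]
        congr 1
        field_simp
      rw [h3, Real.exp_neg] at h2
      simpa [one_div] using h2
    have hmul : (1 - 1/(k:ℝ))^k * g T ≤ (1 / Real.exp 1) * g T :=
      mul_le_mul_of_nonneg_right hpow hgT0
    linarith
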